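/- Leibniz rule for divided differences of exponentials: for every integer q ≥ 0, every tuple (x_0, …, x_q) of real numbers, and all real numbers s and t, one has e^{(s+t)[x_0, …, x_q]} = Σ_{j=0}^{q} e^{s[x_0, …, x_j]} · e^{t[x_j, …, x_q]}. -/

import Mathlib

open scoped BigOperators

/-- Complete homogeneous symmetric polynomial of degree `m` in the entries of the list `l`:
`h_m(x_0, …, x_q) = Σ_{k_0+⋯+k_q = m} x_0^{k_0}⋯x_q^{k_q}` (with `h_0 = 1`). -/
noncomputable def hsymm (l : List ℝ) (m : ℕ) : ℝ :=
  ∑ k ∈ Finset.Nat.antidiagonalTuple l.length m, ∏ i : Fin l.length, l.get i ^ k i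

/-- Divided difference of the exponential `e^{t[x_0, …, x_q]}` over the tuple given by the
list `l` (of length `q+1`), defined by its (absolutely convergent) series
`Σ_{m=0}^∞ (t^{q+m}/(q+m)!) · h_m(x_0, …, x_q)`; by convention it is `0` on the empty tuple. -/
noncomputable def dde (t : ℝ) (l : List ℝ) : ℝ :=
  if l.length = 0 then 0
  else ∑' m : ℕ, t ^ (l.length - 1 + m) / (Nat.factorial (l.length - 1 + m)) * hsymm l m

/-- The sub-tuple `[x_a, …, x_b]` of the sequence `x`, as a list (empty if `b < a`). -/
def seg (x : ℕ → ℝ) (a b : ℕ) : List ℝ :=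
  (List.range (b + 1 - a)).map (fun i => x (a + i))

/-!
Let `B` be the upper bidiagonal matrix with diagonal `x_0, …, x_q` and ones on the superdiagonal.
Multiplying by `B` on the left realises the recursion
`h_{m+1}(x_i, …, x_j) = x_i h_m(x_i, …, x_j) + h_{m+1}(x_{i+1}, …, x_j)`, so the `(i, j)` entry of
`B^m` is `h_{m-(j-i)}(x_i, …, x_j)` and the `(i, j)` entry of `exp (t B)` is `e^{t[x_i, …, x_j]}`
(Opitz's formula). The Leibniz rule is the `(0, q)` entry of `exp ((s + t) B) = exp (s B) exp (t B)`.
-/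

open Finset NormedSpace
open scoped Nat

theorem Finset.Nat.sum_antidiagonalTuple_succ {M : Type*} [AddCommMonoid M] (k n : ℕ)
    (f : (Fin (k + 1) → ℕ) → M) :
    ∑ v ∈ antidiagonalTuple (k + 1) n, f v =
      ∑ p ∈ antidiagonal n, ∑ v ∈ antidiagonalTuple k p.2, f (Fin.cons p.1 v) := by
  simp only [Finset.sum, antidiagonalTuple, Multiset.Nat.antidiagonalTuple,
    List.Nat.antidiagonalTuple, HasAntidiagonal.antidiagonal, Multiset.Nat.antidiagonal,
    Multiset.map_coe, Multiset.sum_coe, List.flatMap_def, List.map_flatten, List.sum_flatten,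
    List.map_map, Function.comp_def]

theorem Matrix.exp_apply_eq_tsum {𝕂 ι : Type*} [RCLike 𝕂] [Fintype ι] [DecidableEq ι]
    (A : Matrix ι ι 𝕂) (i j : ι) : exp A i j = ∑' m : ℕ, (m ! : 𝕂)⁻¹ * (A ^ m) i j := by
  have hs : Summable fun m : ℕ => (m ! : 𝕂)⁻¹ • A ^ m := by
    open scoped Matrix.Norms.Operator in exact expSeries_summable' A
  rw [exp_eq_tsum 𝕂]
  exact (Pi.hasSum.mp (Pi.hasSum.mp hs.hasSum i) j).tsum_eq.symm

lemma hsymm_zero (l : List ℝ) : hsymm l 0 = 1 := by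
  simp [hsymm, Nat.antidiagonalTuple_zero_right]

lemma hsymm_nil_of_pos {m : ℕ} (hm : 0 < m) : hsymm [] m = 0 := by
  obtain ⟨n, rfl⟩ := Nat.exists_eq_add_of_lt hm
  simp [hsymm]

lemma hsymm_cons (y : ℝ) (l : List ℝ) (m : ℕ) :
    hsymm (y :: l) m = ∑ p ∈ antidiagonal m, y ^ p.1 * hsymm l p.2 := by
  simp only [hsymm, List.length_cons, Nat.sum_antidiagonalTuple_succ, Fin.prod_univ_succ,
    mul_sum]
  simp

lemma hsymm_cons_succ (y : ℝ) (l : List ℝ) (m : ℕ) :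
    hsymm (y :: l) (m + 1) = y * hsymm (y :: l) m + hsymm l (m + 1) := by
  rw [hsymm_cons, hsymm_cons, Nat.antidiagonal_succ, sum_cons, sum_map, mul_sum, add_comm]
  simp [pow_succ, mul_assoc, mul_left_comm]

lemma seg_of_lt (x : ℕ → ℝ) {a b : ℕ} (h : b < a) : seg x a b = [] := by
  simp [seg, Nat.sub_eq_zero_of_le h]

lemma seg_cons (x : ℕ → ℝ) {a b : ℕ} (h : a ≤ b) : seg x a b = x a :: seg x (a + 1) b := by
  rw [seg, show b + 1 - a = b - a + 1 by omega, List.range_succ_eq_map, seg,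
    show b + 1 - (a + 1) = b - a by omega]
  simp only [List.map_cons, List.map_map, add_zero]
  congr 1
  exact List.map_congr_left fun i _ => congrArg x (by omega)

lemma length_seg (x : ℕ → ℝ) (a b : ℕ) : (seg x a b).length = b + 1 - a := by
  simp [seg]

/-- The `(i, j)` entry of `bidiag n x ^ m`, i.e. `h_{m-(j-i)}(x_i, …, x_j)`. No guard `i ≤ j` is
needed: for `j < i` the tuple is empty and the degree positive, so the value is `0`. -/
noncomputable def hsymmSeg (x : ℕ → ℝ) (m i j : ℕ) : ℝ :=
  if j ≤ i + m then hsymm (seg x i j) (i + m - j) else 0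

lemma hsymmSeg_of_lt (x : ℕ → ℝ) (m : ℕ) {i j : ℕ} (h : j < i) : hsymmSeg x m i j = 0 := by
  rw [hsymmSeg, seg_of_lt x h]
  split_ifs
  · exact hsymm_nil_of_pos (by omega)
  · rfl

lemma hsymmSeg_zero (x : ℕ → ℝ) (i j : ℕ) : hsymmSeg x 0 i j = if i = j then 1 else 0 := by
  rcases lt_trichotomy i j with h | rfl | h
  · simp [hsymmSeg, h.ne, h.not_ge]
  · simp [hsymmSeg, hsymm_zero]
  · simp [hsymmSeg_of_lt x 0 h, h.ne']

lemma hsymmSeg_succ (x : ℕ → ℝ) (m i j : ℕ) :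
    hsymmSeg x (m + 1) i j = x i * hsymmSeg x m i j + hsymmSeg x m (i + 1) j := by
  rcases lt_or_ge j i with hji | hij
  · simp [hsymmSeg_of_lt x _ hji, hsymmSeg_of_lt x m (hji.trans (Nat.lt_succ_self i))]
  rcases lt_trichotomy j (i + m + 1) with hj | rfl | hj
  · simp only [hsymmSeg, if_pos (show j ≤ i + (m + 1) by omega), if_pos (show j ≤ i + m by omega),
      if_pos (show j ≤ i + 1 + m by omega), show i + (m + 1) - j = i + m - j + 1 by omega,
      show i + 1 + m - j = i + m - j + 1 by omega, seg_cons x hij, hsymm_cons_succ]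
  · simp [hsymmSeg, hsymm_zero, show i + 1 + m = i + m + 1 by omega,
      show i + (m + 1) - (i + m + 1) = 0 by omega]
  · simp [hsymmSeg, show ¬ j ≤ i + (m + 1) by omega, show ¬ j ≤ i + m by omega,
      show ¬ j ≤ i + 1 + m by omega]

lemma hsymmSeg_of_add_lt (x : ℕ → ℝ) {m i j : ℕ} (h : i + m < j) : hsymmSeg x m i j = 0 :=
  if_neg h.not_ge

lemma hsymmSeg_sub_add (x : ℕ → ℝ) (n : ℕ) {i j : ℕ} (h : i ≤ j) :
    hsymmSeg x (j - i + n) i j = hsymm (seg x i j) n := by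
  rw [hsymmSeg, if_pos (by omega), show i + (j - i + n) - j = n by omega]

noncomputable def bidiag (n : ℕ) (x : ℕ → ℝ) : Matrix (Fin n) (Fin n) ℝ :=
  Matrix.diagonal (fun i : Fin n => x i) +
    Matrix.of fun i j : Fin n => if (j : ℕ) = i + 1 then (1 : ℝ) else 0

lemma bidiag_mul_apply {n : ℕ} (x : ℕ → ℝ) (A : Matrix (Fin n) (Fin n) ℝ) (g : ℕ → ℕ → ℝ)
    (hA : ∀ k j, A k j = g k j) (hg : ∀ k j, j < k → g k j = 0) (i j : Fin n) :
    (bidiag n x * A) i j = x i * g i j + g (i + 1) j := by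
  rw [bidiag, add_mul, Matrix.add_apply, Matrix.diagonal_mul, Matrix.mul_apply]
  simp only [Matrix.of_apply, ite_mul, one_mul, zero_mul, hA]
  rw [Fin.sum_univ_eq_sum_range (fun k => if k = i + 1 then g k j else 0), sum_ite_eq']
  split_ifs with hi
  · rfl
  · rw [hg (i + 1) j (by rw [mem_range] at hi; omega)]

lemma bidiag_pow_apply {n : ℕ} (x : ℕ → ℝ) (m : ℕ) (i j : Fin n) :
    (bidiag n x ^ m) i j = hsymmSeg x m i j := by
  induction m generalizing i j with
  | zero => simp [Matrix.one_apply, hsymmSeg_zero, Fin.val_inj]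
  | succ m ih =>
    rw [pow_succ', bidiag_mul_apply x _ _ ih (fun k j h => hsymmSeg_of_lt x m h), hsymmSeg_succ]

lemma exp_smul_bidiag_apply {n : ℕ} (x : ℕ → ℝ) (t : ℝ) {i j : Fin n} (hij : i ≤ j) :
    exp (t • bidiag n x) i j = dde t (seg x i j) := by
  have hij' : (i : ℕ) ≤ j := hij
  rw [Matrix.exp_apply_eq_tsum, dde, length_seg, if_neg (by omega),
    show (j : ℕ) + 1 - i - 1 = j - i by omega]
  simp only [smul_pow, Matrix.smul_apply, bidiag_pow_apply, smul_eq_mul]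
  rw [← (add_right_injective ((j : ℕ) - i)).tsum_eq]
  · refine tsum_congr fun m => ?_
    rw [hsymmSeg_sub_add x m hij', div_eq_inv_mul, mul_assoc]
  · intro m hm
    have hm' : (j : ℕ) - i ≤ m := by
      by_contra hlt
      exact hm (by simp only [hsymmSeg_of_add_lt x (by omega : (i : ℕ) + m < j), mul_zero])
    exact ⟨m - (j - i), Nat.add_sub_cancel' hm'⟩

/-- **Leibniz rule for divided differences of exponentials**: for every `q ≥ 0`, tuple
`(x_0, …, x_q)` and reals `s`, `t`,
`e^{(s+t)[x_0,…,x_q]} = Σ_{j=0}^{q} e^{s[x_0,…,x_j]} · e^{t[x_j,…,x_q]}`. -/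
theorem dde_leibniz (q : ℕ) (x : ℕ → ℝ) (s t : ℝ) :
    dde (s + t) (seg x 0 q)
      = ∑ j ∈ Finset.range (q + 1), dde s (seg x 0 j) * dde t (seg x j q) := by
  set B := bidiag (q + 1) x
  have hexp : exp ((s + t) • B) = exp (s • B) * exp (t • B) := by
    rw [add_smul]
    exact Matrix.exp_add_of_commute _ _ (((Commute.refl B).smul_left s).smul_right t)
  have hentry := congrFun (congrFun hexp 0) (Fin.last q)
  rw [exp_smul_bidiag_apply x _ (Fin.zero_le _), Matrix.mul_apply, Fin.val_zero, Fin.val_last]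
    at hentry
  rw [hentry, ← Fin.sum_univ_eq_sum_range (fun j => dde s (seg x 0 j) * dde t (seg x j q))]
  refine sum_congr rfl fun j _ => ?_
  rw [exp_smul_bidiag_apply x s (Fin.zero_le j), exp_smul_bidiag_apply x t (Fin.le_last j),
    Fin.val_zero, Fin.val_last]
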